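/- arXiv:2304.05602 — 2 statements merged into one kernel-verified Lean document; each statement's English description precedes it below -/
import Mathlib

section
/- Let H = (H_p)_{p in G} be a G-cograded Hopf coquasigroup and let R = (R_p) with R_p = H_p[y_p; τ_p, δ_p] be a group-cograded Hopf coquasigroup-Ore extension of H whose comultiplication satisfies Δ_{p,q}(y_{pq}) = y_p ⊗ 1_q + r_p ⊗ y_q for a family of invertible elements r_p in H_p. Define χ : H_1 → k by χ(h) = ε(τ_1(h)). Then: (1) χ is a k-algebra homomorphism and τ_p(h) = χ(h_(1,1))h_(2,p) for all p in G and h in H_p; (2) χ(h_(1,1))h_(21,p) ⊗ h_(22,q) = r_p h_(1,p) r_p⁻¹ χ(h_(21,1)) ⊗ h_(22,q) = χ(h_(11,1))h_(12,p) ⊗ h_(2,q) for all p,q in G and h in H_{pq}; (3) Δ_{p,q}(δ_{pq}(h)) = δ_p(h_(1,p)) ⊗ h_(2,q) + r_p h_(1,p) ⊗ δ_q(h_(2,q)) for all p,q in G and h in H_{pq}. -/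
open scoped TensorProduct

section Preliminaries

variable (k : Type*) [Field k] {G : Type*} [Group G]

/-- Transport along an equality of group indices, as a `k`-linear map. -/
def lcast {H : G → Type*} [∀ p, AddCommMonoid (H p)] [∀ p, Module k (H p)]
    {p q : G} (e : p = q) : H p →ₗ[k] H q where
  toFun h := e ▸ h
  map_add' := by subst e; intros; rfl
  map_smul' := by subst e; intros; rfl

/-- A `G`-cograded Hopf coquasigroup over the field `k`. -/
structure GCHCQG (H : G → Type*) [∀ p, Ring (H p)] [∀ p, Algebra k (H p)] where
  /-- the comultiplication, a family of algebra maps `Δ_{p,q} : H_{pq} → H_p ⊗ H_q` -/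
  Δ : ∀ p q : G, H (p * q) →ₐ[k] (H p ⊗[k] H q)
  /-- the counit -/
  ε : H 1 →ₐ[k] k
  /-- the antipode, a family of `k`-linear anti-homomorphisms `S_p : H_p → H_{p⁻¹}` -/
  S : ∀ p : G, H p →ₗ[k] H p⁻¹
  S_one : ∀ p : G, S p (1 : H p) = 1
  S_mul : ∀ (p : G) (a b : H p), S p (a * b) = S p b * S p a
  /-- `(ε ⊗ id)Δ_{1,p} = id` -/
  counit_left : ∀ (p : G) (h : H (1 * p)),
    TensorProduct.lid k (H p)
      (TensorProduct.map ε.toLinearMap LinearMap.id (Δ 1 p h))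
      = lcast k (one_mul p) h
  /-- `(id ⊗ ε)Δ_{p,1} = id` -/
  counit_right : ∀ (p : G) (h : H (p * 1)),
    TensorProduct.rid k (H p)
      (TensorProduct.map LinearMap.id ε.toLinearMap (Δ p 1 h))
      = lcast k (mul_one p) h
  /-- `S_{q⁻¹}(h_(1,q⁻¹))h_(21,q) ⊗ h_(22,p) = 1_q ⊗ h` -/
  antipode_1 : ∀ (p q : G) (h : H (q⁻¹ * (q * p))),
    TensorProduct.map (LinearMap.mul' k (H q)) LinearMap.id
      (TensorProduct.map
        (TensorProduct.map ((lcast k (inv_inv q)).comp (S q⁻¹)) LinearMap.id)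
        LinearMap.id
        ((TensorProduct.assoc k (H q⁻¹) (H q) (H p)).symm
          (TensorProduct.map LinearMap.id (Δ q p).toLinearMap
            (Δ q⁻¹ (q * p) h))))
      = (1 : H q) ⊗ₜ[k] lcast k (inv_mul_cancel_left q p) h
  /-- `h_(1,q)S_{q⁻¹}(h_(21,q⁻¹)) ⊗ h_(22,p) = 1_q ⊗ h` -/
  antipode_2 : ∀ (p q : G) (h : H (q * (q⁻¹ * p))),
    TensorProduct.map (LinearMap.mul' k (H q)) LinearMap.id
      (TensorProduct.map
        (TensorProduct.map LinearMap.id ((lcast k (inv_inv q)).comp (S q⁻¹)))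
        LinearMap.id
        ((TensorProduct.assoc k (H q) (H q⁻¹) (H p)).symm
          (TensorProduct.map LinearMap.id (Δ q⁻¹ p).toLinearMap
            (Δ q (q⁻¹ * p) h))))
      = (1 : H q) ⊗ₜ[k] lcast k (mul_inv_cancel_left q p) h
  /-- `h_(11,p) ⊗ h_(12,q)S_{q⁻¹}(h_(2,q⁻¹)) = h ⊗ 1_q` -/
  antipode_3 : ∀ (p q : G) (h : H ((p * q) * q⁻¹)),
    TensorProduct.map LinearMap.id (LinearMap.mul' k (H q))
      (TensorProduct.map LinearMap.id
        (TensorProduct.map LinearMap.id ((lcast k (inv_inv q)).comp (S q⁻¹)))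
        ((TensorProduct.assoc k (H p) (H q) (H q⁻¹))
          (TensorProduct.map (Δ p q).toLinearMap LinearMap.id
            (Δ (p * q) q⁻¹ h))))
      = lcast k (mul_inv_cancel_right p q) h ⊗ₜ[k] (1 : H q)
  /-- `h_(11,p) ⊗ S_{q⁻¹}(h_(12,q⁻¹))h_(2,q) = h ⊗ 1_q` -/
  antipode_4 : ∀ (p q : G) (h : H ((p * q⁻¹) * q)),
    TensorProduct.map LinearMap.id (LinearMap.mul' k (H q))
      (TensorProduct.map LinearMap.id
        (TensorProduct.map ((lcast k (inv_inv q)).comp (S q⁻¹)) LinearMap.id)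
        ((TensorProduct.assoc k (H p) (H q⁻¹) (H q))
          (TensorProduct.map (Δ p q⁻¹).toLinearMap LinearMap.id
            (Δ (p * q⁻¹) q h))))
      = lcast k (inv_mul_cancel_right p q) h ⊗ₜ[k] (1 : H q)

/-- A realization of the Ore extension `A[y; τ, δ]` : a `k`-algebra `R` containing `A`
(via `ι`), free as a left `A`-module with basis `{yⁿ}`, with `y·a = τ(a)y + δ(a)`. -/
structure OreData (A R : Type*) [Ring A] [Algebra k A] [Ring R] [Algebra k R]
    (τ : A →ₐ[k] A) (δ : A →ₗ[k] A) where
  ι : A →ₐ[k] R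
  y : R
  rel : ∀ a : A, y * ι a = ι (τ a) * y + ι (δ a)
  free : ∀ f : ℕ →₀ A, (f.sum fun n a => ι a * y ^ n) = 0 → f = 0
  span : ∀ x : R, ∃ f : ℕ →₀ A, x = f.sum fun n a => ι a * y ^ n

/-- A group-cograded Hopf coquasigroup-Ore extension of `H` : the family
`R_p = H_p[y_p; τ_p, δ_p]` carrying a `G`-cograded Hopf coquasigroup structure
whose structure maps restrict on the subalgebras `H_p` to those of `H`. -/
structure GCHCQGOreExt {H : G → Type*} [∀ p, Ring (H p)] [∀ p, Algebra k (H p)]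
    (HH : GCHCQG k H)
    (R : G → Type*) [∀ p, Ring (R p)] [∀ p, Algebra k (R p)]
    (τ : ∀ p : G, H p →ₐ[k] H p) (δ : ∀ p : G, H p →ₗ[k] H p) where
  RR : GCHCQG k R
  ore : ∀ p : G, OreData k (H p) (R p) (τ p) (δ p)
  deriv : ∀ (p : G) (a b : H p), δ p (a * b) = δ p a * b + τ p a * δ p b
  compat_Δ : ∀ (p q : G) (h : H (p * q)),
    RR.Δ p q ((ore (p * q)).ι h)
      = TensorProduct.map ((ore p).ι).toLinearMap ((ore q).ι).toLinearMap (HH.Δ p q h)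
  compat_ε : ∀ h : H (1 : G), RR.ε ((ore 1).ι h) = HH.ε h
  compat_S : ∀ (p : G) (h : H p), RR.S p ((ore p).ι h) = (ore p⁻¹).ι (HH.S p h)

/-- A Hopf coquasigroup over the field `k`. -/
structure HopfCoquasigroup (H : Type*) [Ring H] [Algebra k H] where
  Δ : H →ₐ[k] H ⊗[k] H
  ε : H →ₐ[k] k
  S : H →ₗ[k] H
  counit_left : ∀ h : H,
    TensorProduct.lid k H (TensorProduct.map ε.toLinearMap LinearMap.id (Δ h)) = h
  counit_right : ∀ h : H,
    TensorProduct.rid k H (TensorProduct.map LinearMap.id ε.toLinearMap (Δ h)) = h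
  antipode_1 : ∀ h : H,
    TensorProduct.map (LinearMap.mul' k H) LinearMap.id
      (TensorProduct.map (TensorProduct.map S LinearMap.id) LinearMap.id
        ((TensorProduct.assoc k H H H).symm
          (TensorProduct.map LinearMap.id Δ.toLinearMap (Δ h))))
      = (1 : H) ⊗ₜ[k] h
  antipode_2 : ∀ h : H,
    TensorProduct.map (LinearMap.mul' k H) LinearMap.id
      (TensorProduct.map (TensorProduct.map LinearMap.id S) LinearMap.id
        ((TensorProduct.assoc k H H H).symm
          (TensorProduct.map LinearMap.id Δ.toLinearMap (Δ h))))
      = (1 : H) ⊗ₜ[k] h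
  antipode_3 : ∀ h : H,
    TensorProduct.map LinearMap.id (LinearMap.mul' k H)
      (TensorProduct.map LinearMap.id (TensorProduct.map S LinearMap.id)
        ((TensorProduct.assoc k H H H)
          (TensorProduct.map Δ.toLinearMap LinearMap.id (Δ h))))
      = h ⊗ₜ[k] (1 : H)
  antipode_4 : ∀ h : H,
    TensorProduct.map LinearMap.id (LinearMap.mul' k H)
      (TensorProduct.map LinearMap.id (TensorProduct.map LinearMap.id S)
        ((TensorProduct.assoc k H H H)
          (TensorProduct.map Δ.toLinearMap LinearMap.id (Δ h))))
      = h ⊗ₜ[k] (1 : H)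

end Preliminaries


section AuxOre

namespace OreData
variable {k : Type*} [Field k] {A R : Type*} [Ring A] [Algebra k A] [Ring R] [Algebra k R]
  {τ : A →ₐ[k] A} {δ : A →ₗ[k] A} (od : OreData k A R τ δ)

noncomputable def Φ : (ℕ →₀ A) →ₗ[k] R :=
  Finsupp.lsum k fun n => LinearMap.mulRight k (od.y ^ n) ∘ₗ od.ι.toLinearMap

lemma Φ_apply (f : ℕ →₀ A) : od.Φ f = f.sum fun n a => od.ι a * od.y ^ n := rfl

lemma Φ_bij : Function.Bijective od.Φ := by
  constructor
  · rw [injective_iff_map_eq_zero]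
    intro f hf
    exact od.free f (by rw [← od.Φ_apply]; exact hf)
  · intro x
    obtain ⟨f, hf⟩ := od.span x
    exact ⟨f, by rw [od.Φ_apply]; exact hf.symm⟩

noncomputable def equiv : (ℕ →₀ A) ≃ₗ[k] R := LinearEquiv.ofBijective od.Φ od.Φ_bij

noncomputable def coeff (n : ℕ) : R →ₗ[k] A :=
  Finsupp.lapply n ∘ₗ od.equiv.symm.toLinearMap

lemma coeff_mul_pow (n m : ℕ) (a : A) :
    od.coeff n (od.ι a * od.y ^ m) = Finsupp.single m a n := by
  have : od.equiv (Finsupp.single m a) = od.ι a * od.y ^ m := by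
    show od.Φ _ = _
    rw [od.Φ_apply, Finsupp.sum_single_index (by simp)]
  simp [coeff, ← this, LinearEquiv.symm_apply_apply]

lemma coeff_ι (n : ℕ) (a : A) : od.coeff n (od.ι a) = Finsupp.single 0 a n := by
  have := od.coeff_mul_pow n 0 a
  simpa using this

lemma coeff_ι_y (n : ℕ) (a : A) : od.coeff n (od.ι a * od.y) = Finsupp.single 1 a n := by
  have := od.coeff_mul_pow n 1 a
  simpa using this

lemma coeff_y_ι (n : ℕ) (a : A) :
    od.coeff n (od.y * od.ι a) = Finsupp.single 1 (τ a) n + Finsupp.single 0 (δ a) n := by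
  rw [od.rel, map_add, od.coeff_ι_y, od.coeff_ι]

lemma c0_ι : od.coeff 0 ∘ₗ od.ι.toLinearMap = LinearMap.id := by
  ext a; simp [od.coeff_ι]

lemma c1_ι : od.coeff 1 ∘ₗ od.ι.toLinearMap = 0 := by
  ext a; simp [od.coeff_ι, Finsupp.single_apply]

lemma c0_yι : od.coeff 0 ∘ₗ LinearMap.mulLeft k od.y ∘ₗ od.ι.toLinearMap = δ := by
  ext a; simp [od.coeff_y_ι, Finsupp.single_apply]

lemma c1_yι : od.coeff 1 ∘ₗ LinearMap.mulLeft k od.y ∘ₗ od.ι.toLinearMap = τ.toLinearMap := by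
  ext a; simp [od.coeff_y_ι, Finsupp.single_apply]

lemma c0_ιy : od.coeff 0 ∘ₗ LinearMap.mulRight k od.y ∘ₗ od.ι.toLinearMap = 0 := by
  ext a; simp [od.coeff_ι_y, Finsupp.single_apply]

lemma c1_ιy : od.coeff 1 ∘ₗ LinearMap.mulRight k od.y ∘ₗ od.ι.toLinearMap = LinearMap.id := by
  ext a; simp [od.coeff_ι_y]

lemma c0_cι (c : A) :
    od.coeff 0 ∘ₗ LinearMap.mulLeft k (od.ι c) ∘ₗ od.ι.toLinearMap = LinearMap.mulLeft k c := by
  ext a; simp [← map_mul, od.coeff_ι]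

lemma c1_cι (c : A) :
    od.coeff 1 ∘ₗ LinearMap.mulLeft k (od.ι c) ∘ₗ od.ι.toLinearMap = 0 := by
  ext a; simp [← map_mul, od.coeff_ι, Finsupp.single_apply]

lemma c0_ιc (c : A) :
    od.coeff 0 ∘ₗ LinearMap.mulRight k (od.ι c) ∘ₗ od.ι.toLinearMap = LinearMap.mulRight k c := by
  ext a; simp [← map_mul, od.coeff_ι]

lemma c1_ιc (c : A) :
    od.coeff 1 ∘ₗ LinearMap.mulRight k (od.ι c) ∘ₗ od.ι.toLinearMap = 0 := by
  ext a; simp [← map_mul, od.coeff_ι, Finsupp.single_apply]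

end OreData

variable {k : Type*} [Field k]

lemma aux_map_map {A1 A2 B1 B2 C1 C2 : Type*}
    [AddCommMonoid A1] [Module k A1] [AddCommMonoid A2] [Module k A2]
    [AddCommMonoid B1] [Module k B1] [AddCommMonoid B2] [Module k B2]
    [AddCommMonoid C1] [Module k C1] [AddCommMonoid C2] [Module k C2]
    (g1 : B1 →ₗ[k] C1) (g2 : B2 →ₗ[k] C2) (f1 : A1 →ₗ[k] B1) (f2 : A2 →ₗ[k] B2)
    (t : A1 ⊗[k] A2) :
    TensorProduct.map g1 g2 (TensorProduct.map f1 f2 t)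
      = TensorProduct.map (g1 ∘ₗ f1) (g2 ∘ₗ f2) t := by
  rw [TensorProduct.map_comp]; rfl

lemma aux_tmul_mul {A1 A2 B1 B2 R1 R2 : Type*}
    [AddCommMonoid A1] [Module k A1] [AddCommMonoid A2] [Module k A2]
    [AddCommMonoid B1] [Module k B1] [AddCommMonoid B2] [Module k B2]
    [Ring R1] [Algebra k R1] [Ring R2] [Algebra k R2]
    (g1 : R1 →ₗ[k] B1) (g2 : R2 →ₗ[k] B2) (f1 : A1 →ₗ[k] R1) (f2 : A2 →ₗ[k] R2)
    (u : R1) (v : R2) (t : A1 ⊗[k] A2) :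
    TensorProduct.map g1 g2 ((u ⊗ₜ[k] v) * TensorProduct.map f1 f2 t)
      = TensorProduct.map (g1 ∘ₗ LinearMap.mulLeft k u ∘ₗ f1)
          (g2 ∘ₗ LinearMap.mulLeft k v ∘ₗ f2) t := by
  induction t with
  | zero => simp
  | tmul a b => simp [Algebra.TensorProduct.tmul_mul_tmul]
  | add x y hx hy => simp [mul_add, hx, hy]

lemma aux_mul_tmul {A1 A2 B1 B2 R1 R2 : Type*}
    [AddCommMonoid A1] [Module k A1] [AddCommMonoid A2] [Module k A2]
    [AddCommMonoid B1] [Module k B1] [AddCommMonoid B2] [Module k B2]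
    [Ring R1] [Algebra k R1] [Ring R2] [Algebra k R2]
    (g1 : R1 →ₗ[k] B1) (g2 : R2 →ₗ[k] B2) (f1 : A1 →ₗ[k] R1) (f2 : A2 →ₗ[k] R2)
    (u : R1) (v : R2) (t : A1 ⊗[k] A2) :
    TensorProduct.map g1 g2 ((TensorProduct.map f1 f2 t) * (u ⊗ₜ[k] v))
      = TensorProduct.map (g1 ∘ₗ LinearMap.mulRight k u ∘ₗ f1)
          (g2 ∘ₗ LinearMap.mulRight k v ∘ₗ f2) t := by
  induction t with
  | zero => simp
  | tmul a b => simp [Algebra.TensorProduct.tmul_mul_tmul]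
  | add x y hx hy => simp [add_mul, hx, hy]

lemma aux_lid {A A2 B : Type*}
    [AddCommMonoid A] [Module k A] [AddCommMonoid A2] [Module k A2]
    [AddCommMonoid B] [Module k B]
    (f : A →ₗ[k] k) (g : A2 →ₗ[k] B) (t : A ⊗[k] A2) :
    TensorProduct.lid k B (TensorProduct.map f g t)
      = g (TensorProduct.lid k A2 (TensorProduct.map f LinearMap.id t)) := by
  induction t with
  | zero => simp
  | tmul a b => simp [TensorProduct.lid_tmul]
  | add x y hx hy => simp [hx, hy]

lemma lcast_fam {G : Type*} [Group G] {H : G → Type*}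
    [∀ p, AddCommMonoid (H p)] [∀ p, Module k (H p)]
    (F : ∀ s, H s → H s) {a b : G} (e : a = b) (x : H a) :
    lcast k e (F a x) = F b (lcast k e x) := by subst e; rfl

lemma lcast_lcast {G : Type*} [Group G] {H : G → Type*}
    [∀ p, AddCommMonoid (H p)] [∀ p, Module k (H p)]
    {a b : G} (e : a = b) (x : H b) :
    lcast k e (lcast k e.symm x) = x := by subst e; rfl

end AuxOre

/-- Theorem 4.3, necessity: If `R = (H_p[y_p; τ_p, δ_p])` is a
group-cograded Hopf coquasigroup-Ore extension of `H` with
`Δ_{p,q}(y_{pq}) = y_p ⊗ 1_q + r_p ⊗ y_q` (each `r_p` invertible), and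
`χ(h) = ε(τ_1(h))`, then: (1) `χ` is a character and `τ_p(h) = χ(h_(1,1))h_(2,p)`;
(2) the compatibility (D2) holds; (3) `Δ(δ_{pq}(h)) = δ_p(h_(1,p)) ⊗ h_(2,q)
 + r_p h_(1,p) ⊗ δ_q(h_(2,q))`. -/
theorem statement10 (k : Type*) [Field k] {G : Type*} [Group G]
    (H : G → Type*) [∀ p, Ring (H p)] [∀ p, Algebra k (H p)]
    (HH : GCHCQG k H)
    (R : G → Type*) [∀ p, Ring (R p)] [∀ p, Algebra k (R p)]
    (τ : ∀ p : G, H p →ₐ[k] H p) (δ : ∀ p : G, H p →ₗ[k] H p)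
    (ext : GCHCQGOreExt k HH R τ δ)
    (r : ∀ p : G, (H p)ˣ)
    (hy : ∀ p q : G,
      ext.RR.Δ p q ((ext.ore (p * q)).y)
        = (ext.ore p).y ⊗ₜ[k] (1 : R q)
          + (ext.ore p).ι ((r p : H p)) ⊗ₜ[k] (ext.ore q).y) :
    -- (1) χ := ε ∘ τ₁ is a k-algebra homomorphism and τ_p(h) = χ(h_(1,1))h_(2,p)
    ((∀ a b : H (1 : G), HH.ε (τ 1 (a * b)) = HH.ε (τ 1 a) * HH.ε (τ 1 b)) ∧
     (HH.ε (τ 1 (1 : H (1 : G))) = 1) ∧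
     (∀ (p : G) (h : H p),
        τ p h
          = TensorProduct.lid k (H p)
              (TensorProduct.map (HH.ε.comp (τ 1)).toLinearMap LinearMap.id
                (HH.Δ 1 p (lcast k (one_mul p).symm h))))) ∧
    -- (2) χ(h_(1,1))h_(21,p) ⊗ h_(22,q) = r_p h_(1,p) r_p⁻¹ χ(h_(21,1)) ⊗ h_(22,q)
    --       = χ(h_(11,1))h_(12,p) ⊗ h_(2,q)
    (∀ (p q : G) (h : H (p * q)),
      (TensorProduct.lid k (H p ⊗[k] H q)
          (TensorProduct.map (HH.ε.comp (τ 1)).toLinearMap (HH.Δ p q).toLinearMap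
            (HH.Δ 1 (p * q) (lcast k (one_mul (p * q)).symm h)))
        = TensorProduct.map
            ((LinearMap.mulLeft k ((r p : H p))).comp
              (LinearMap.mulRight k (((r p)⁻¹ : (H p)ˣ) : H p)))
            ((TensorProduct.lid k (H q)).toLinearMap ∘ₗ
              TensorProduct.map (HH.ε.comp (τ 1)).toLinearMap LinearMap.id ∘ₗ
              (HH.Δ 1 q).toLinearMap ∘ₗ lcast k (one_mul q).symm)
            (HH.Δ p q h)) ∧
      (TensorProduct.map
            ((LinearMap.mulLeft k ((r p : H p))).comp
              (LinearMap.mulRight k (((r p)⁻¹ : (H p)ˣ) : H p)))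
            ((TensorProduct.lid k (H q)).toLinearMap ∘ₗ
              TensorProduct.map (HH.ε.comp (τ 1)).toLinearMap LinearMap.id ∘ₗ
              (HH.Δ 1 q).toLinearMap ∘ₗ lcast k (one_mul q).symm)
            (HH.Δ p q h)
        = TensorProduct.map
            ((TensorProduct.lid k (H p)).toLinearMap ∘ₗ
              TensorProduct.map (HH.ε.comp (τ 1)).toLinearMap LinearMap.id ∘ₗ
              (HH.Δ 1 p).toLinearMap ∘ₗ lcast k (one_mul p).symm)
            LinearMap.id (HH.Δ p q h))) ∧
    -- (3) Δ(δ_{pq}(h)) = δ_p(h_(1,p)) ⊗ h_(2,q) + r_p h_(1,p) ⊗ δ_q(h_(2,q))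
    (∀ (p q : G) (h : H (p * q)),
      HH.Δ p q (δ (p * q) h)
        = TensorProduct.map (δ p) LinearMap.id (HH.Δ p q h)
          + TensorProduct.map (LinearMap.mulLeft k ((r p : H p))) (δ q)
              (HH.Δ p q h)) := by
  classical
  have key : ∀ (p q : G) (h : H (p * q)),
      TensorProduct.map (τ p).toLinearMap LinearMap.id (HH.Δ p q h)
          = HH.Δ p q (τ (p * q) h)
        ∧ TensorProduct.map (LinearMap.mulLeft k ((r p : H p))) (τ q).toLinearMap (HH.Δ p q h)
          = TensorProduct.map (LinearMap.mulRight k ((r p : H p))) LinearMap.id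
              (HH.Δ p q (τ (p * q) h))
        ∧ HH.Δ p q (δ (p * q) h)
          = TensorProduct.map (δ p) LinearMap.id (HH.Δ p q h)
            + TensorProduct.map (LinearMap.mulLeft k ((r p : H p))) (δ q) (HH.Δ p q h) := by
    intro p q h
    have E0 := congrArg (ext.RR.Δ p q) ((ext.ore (p * q)).rel h)
    rw [map_mul, map_add, map_mul, hy, ext.compat_Δ, ext.compat_Δ, ext.compat_Δ,
      add_mul, mul_add] at E0
    have mk : ∀ n m : ℕ,
        TensorProduct.map
            ((ext.ore p).coeff n ∘ₗ LinearMap.mulLeft k (ext.ore p).y ∘ₗ (ext.ore p).ι.toLinearMap)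
            ((ext.ore q).coeff m ∘ₗ (ext.ore q).ι.toLinearMap) (HH.Δ p q h)
          + TensorProduct.map
            ((ext.ore p).coeff n ∘ₗ LinearMap.mulLeft k ((ext.ore p).ι ((r p : H p))) ∘ₗ (ext.ore p).ι.toLinearMap)
            ((ext.ore q).coeff m ∘ₗ LinearMap.mulLeft k (ext.ore q).y ∘ₗ (ext.ore q).ι.toLinearMap)
            (HH.Δ p q h)
        = TensorProduct.map
            ((ext.ore p).coeff n ∘ₗ LinearMap.mulRight k (ext.ore p).y ∘ₗ (ext.ore p).ι.toLinearMap)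
            ((ext.ore q).coeff m ∘ₗ (ext.ore q).ι.toLinearMap) (HH.Δ p q (τ (p * q) h))
          + TensorProduct.map
            ((ext.ore p).coeff n ∘ₗ LinearMap.mulRight k ((ext.ore p).ι ((r p : H p))) ∘ₗ (ext.ore p).ι.toLinearMap)
            ((ext.ore q).coeff m ∘ₗ LinearMap.mulRight k (ext.ore q).y ∘ₗ (ext.ore q).ι.toLinearMap)
            (HH.Δ p q (τ (p * q) h))
          + TensorProduct.map
            ((ext.ore p).coeff n ∘ₗ (ext.ore p).ι.toLinearMap)
            ((ext.ore q).coeff m ∘ₗ (ext.ore q).ι.toLinearMap) (HH.Δ p q (δ (p * q) h)) := by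
      intro n m
      have C := congrArg (TensorProduct.map ((ext.ore p).coeff n) ((ext.ore q).coeff m)) E0
      simpa only [map_add, aux_tmul_mul, aux_mul_tmul, aux_map_map,
        LinearMap.mulLeft_one, LinearMap.mulRight_one, LinearMap.id_comp] using C
    refine ⟨?_, ?_, ?_⟩
    · have h10 := mk 1 0
      simp only [(ext.ore p).c1_yι, (ext.ore p).c1_cι, (ext.ore p).c1_ιy, (ext.ore p).c1_ιc,
        (ext.ore p).c1_ι, (ext.ore q).c0_ι, TensorProduct.map_zero_left,
        TensorProduct.map_zero_right, TensorProduct.map_id, LinearMap.id_apply, LinearMap.zero_apply,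
        add_zero, zero_add] at h10
      exact h10
    · have h01 := mk 0 1
      simp only [(ext.ore p).c0_yι, (ext.ore p).c0_cι, (ext.ore p).c0_ιy, (ext.ore p).c0_ιc,
        (ext.ore p).c0_ι, (ext.ore q).c1_ι, (ext.ore q).c1_yι, (ext.ore q).c1_ιy,
        TensorProduct.map_zero_left, TensorProduct.map_zero_right, TensorProduct.map_id, LinearMap.zero_apply,
        LinearMap.id_apply, add_zero, zero_add] at h01
      exact h01
    · have h00 := mk 0 0
      simp only [(ext.ore p).c0_yι, (ext.ore p).c0_cι, (ext.ore p).c0_ιy, (ext.ore p).c0_ιc,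
        (ext.ore p).c0_ι, (ext.ore q).c0_ι, (ext.ore q).c0_yι, (ext.ore q).c0_ιy,
        TensorProduct.map_zero_left, TensorProduct.map_zero_right, TensorProduct.map_id, LinearMap.zero_apply,
        LinearMap.id_apply, add_zero, zero_add] at h00
      exact h00.symm
  have tau_eq : ∀ (p : G) (h : H p),
      τ p h
        = TensorProduct.lid k (H p)
            (TensorProduct.map (HH.ε.comp (τ 1)).toLinearMap LinearMap.id
              (HH.Δ 1 p (lcast k (one_mul p).symm h))) := by
    intro p h
    have K1 := (key 1 p (lcast k (one_mul p).symm h)).1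
    have comp : TensorProduct.map (HH.ε.comp (τ 1)).toLinearMap
          (LinearMap.id : H p →ₗ[k] H p)
        = TensorProduct.map HH.ε.toLinearMap LinearMap.id ∘ₗ
            TensorProduct.map (τ 1).toLinearMap LinearMap.id := by
      rw [← TensorProduct.map_comp, LinearMap.id_comp, AlgHom.comp_toLinearMap]
    rw [comp, LinearMap.comp_apply, K1, HH.counit_left]
    have e1 := lcast_fam (k := k) (F := fun s => (⇑(τ s) : H s → H s)) (one_mul p)
      (lcast k (one_mul p).symm h)
    simp only [lcast_lcast] at e1
    rw [e1]
  have tauL : ∀ s : G,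
      ((TensorProduct.lid k (H s)).toLinearMap ∘ₗ
        TensorProduct.map (HH.ε.comp (τ 1)).toLinearMap LinearMap.id ∘ₗ
        (HH.Δ 1 s).toLinearMap ∘ₗ lcast k (one_mul s).symm) = (τ s).toLinearMap := by
    intro s
    ext x
    simp only [LinearMap.comp_apply, LinearEquiv.coe_coe, AlgHom.toLinearMap_apply]
    exact (tau_eq s x).symm
  have dtau : ∀ (p q : G) (h : H (p * q)),
      TensorProduct.map
          ((LinearMap.mulLeft k ((r p : H p))).comp
            (LinearMap.mulRight k (((r p)⁻¹ : (H p)ˣ) : H p)))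
          (τ q).toLinearMap (HH.Δ p q h)
        = HH.Δ p q (τ (p * q) h) := by
    intro p q h
    have K2 := (key p q h).2.1
    have C := congrArg
      (TensorProduct.map (LinearMap.mulRight k (((r p)⁻¹ : (H p)ˣ) : H p)) LinearMap.id) K2
    rw [aux_map_map, aux_map_map] at C
    have cA : LinearMap.mulRight k (((r p)⁻¹ : (H p)ˣ) : H p) ∘ₗ
          LinearMap.mulLeft k ((r p : H p))
        = (LinearMap.mulLeft k ((r p : H p))).comp
            (LinearMap.mulRight k (((r p)⁻¹ : (H p)ˣ) : H p)) := by
      ext a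
      simp [LinearMap.mulRight_apply, LinearMap.mulLeft_apply, mul_assoc]
    have cB : LinearMap.mulRight k (((r p)⁻¹ : (H p)ˣ) : H p) ∘ₗ
          LinearMap.mulRight k ((r p : H p)) = LinearMap.id := by
      ext a
      simp [LinearMap.mulRight_apply]
    rw [cA, cB] at C
    simpa only [LinearMap.id_comp, TensorProduct.map_id, LinearMap.id_apply] using C
  refine ⟨⟨?_, ?_, tau_eq⟩, ?_, ?_⟩
  · intro a b
    simp [map_mul]
  · simp
  · intro p q h
    constructor
    · rw [tauL q, aux_lid, ← tau_eq (p * q) h]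
      exact (dtau p q h).symm
    · rw [tauL q, tauL p, dtau p q h]
      exact (key p q h).1.symm
  · intro p q h
    exact (key p q h).2.2
end

section
/- Let H = (H_p)_{p in G} be a G-cograded Hopf coquasigroup, r_p in H_p a family of invertible elements, and δ_p : H_p → H_p a family of k-linear maps satisfying Δ_{p,q}(δ_{pq}(h)) = δ_p(h_(1,p)) ⊗ h_(2,q) + r_p h_(1,p) ⊗ δ_q(h_(2,q)) for all p,q in G and h in H_{pq}, and ε(δ_1(h)) = 0 for all h in H_1. Then for every p in G and h in H_1, writing Δ_{p,p⁻¹}(h) = h_(1,p) ⊗ h_(2,p⁻¹): δ_p(h_(1,p))S_{p⁻¹}(h_(2,p⁻¹)) + r_p h_(1,p) S_{p⁻¹}(δ_{p⁻¹}(h_(2,p⁻¹))) = 0; equivalently, h_(1,p)S_{p⁻¹}(δ_{p⁻¹}(h_(2,p⁻¹))) = −r_p⁻¹ δ_p(h_(1,p))S_{p⁻¹}(h_(2,p⁻¹)). -/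
open scoped TensorProduct

set_option synthInstance.maxHeartbeats 1000000
set_option maxHeartbeats 1000000
set_option linter.unusedSectionVars false
section Aux

variable {k : Type*} [Field k] {G : Type*} [Group G]
variable {H : G → Type*} [∀ p, Ring (H p)] [∀ p, Algebra k (H p)]

lemma lcast_lcast_s13 {p q s : G} (e1 : p = q) (e2 : q = s) (h : H p) :
    lcast k e2 (lcast k e1 h) = lcast k (e1.trans e2) h := by
  subst e1; subst e2; rfl

lemma lcast_refl {p : G} (e : p = p) (h : H p) : lcast k e h = h := rfl

lemma delta_lcast (δ : ∀ p : G, H p →ₗ[k] H p) {p q : G} (e : p = q) (h : H p) :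
    lcast k e (δ p h) = δ q (lcast k e h) := by subst e; rfl

lemma Δ_lcast (W : GCHCQG k H) {a b : G} (c : G) (e : a = b) (ee : a * c = b * c)
    (x : H (a * c)) :
    W.Δ b c (lcast k ee x)
      = TensorProduct.map (lcast k e) LinearMap.id (W.Δ a c x) := by
  subst e
  rw [lcast_refl]
  have h1 : (lcast k (rfl : a = a) : H a →ₗ[k] H a) = LinearMap.id := rfl
  rw [h1, TensorProduct.map_id]
  rfl

lemma tmap_tmap {M N M' N' M'' N'' : Type*}
    [AddCommMonoid M] [AddCommMonoid N] [AddCommMonoid M'] [AddCommMonoid N']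
    [AddCommMonoid M''] [AddCommMonoid N'']
    [Module k M] [Module k N] [Module k M'] [Module k N'] [Module k M''] [Module k N'']
    (f : M →ₗ[k] M') (g : N →ₗ[k] N') (f2 : M' →ₗ[k] M'') (g2 : N' →ₗ[k] N'')
    (t : M ⊗[k] N) :
    TensorProduct.map f2 g2 (TensorProduct.map f g t)
      = TensorProduct.map (f2.comp f) (g2.comp g) t := by
  induction t using TensorProduct.induction_on with
  | zero => simp
  | tmul a b => simp
  | add a b ha hb => simp [ha, hb]

lemma mul'_map_mulLeft {P Q : Type*} [Ring P] [Algebra k P]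
    [AddCommMonoid Q] [Module k Q]
    (rr : P) (f : Q →ₗ[k] P) (t : P ⊗[k] Q) :
    LinearMap.mul' k P (TensorProduct.map (LinearMap.mulLeft k rr) f t)
      = rr * LinearMap.mul' k P (TensorProduct.map LinearMap.id f t) := by
  induction t using TensorProduct.induction_on with
  | zero => simp
  | tmul a b => simp [mul_assoc]
  | add a b ha hb => simp [ha, hb, mul_add]

lemma aux_inner (W : GCHCQG k H) (q : G)
    (s : H (1:G) ⊗[k] H q) (v : H q⁻¹) :
    TensorProduct.lid k (H q) (TensorProduct.map W.ε.toLinearMap LinearMap.id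
      (TensorProduct.map LinearMap.id (LinearMap.mul' k (H q))
        (TensorProduct.map LinearMap.id
          (TensorProduct.map LinearMap.id ((lcast k (inv_inv q)).comp (W.S q⁻¹)))
          ((TensorProduct.assoc k (H (1:G)) (H q) (H q⁻¹)) (s ⊗ₜ[k] v)))))
    = TensorProduct.lid k (H q)
        (TensorProduct.map W.ε.toLinearMap LinearMap.id s)
        * ((lcast k (inv_inv q)).comp (W.S q⁻¹)) v := by
  induction s using TensorProduct.induction_on with
  | zero => simp
  | tmul a b => simp [smul_mul_assoc]
  | add x y hx hy =>
      simp only [TensorProduct.add_tmul, map_add, hx, hy, add_mul]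

lemma key_antipode (W : GCHCQG k H) (q : G) (x : H (q * q⁻¹)) :
    LinearMap.mul' k (H q)
      (TensorProduct.map LinearMap.id ((lcast k (inv_inv q)).comp (W.S q⁻¹))
        (W.Δ q q⁻¹ x))
    = W.ε (lcast k (mul_inv_cancel q) x) • (1 : H q) := by
  have ee : q * q⁻¹ = (1 * q) * q⁻¹ := by rw [one_mul]
  have A3 := W.antipode_3 1 q (lcast k ee x)
  have hF := congrArg (fun t => TensorProduct.lid k (H q)
    (TensorProduct.map W.ε.toLinearMap LinearMap.id t)) A3
  rw [Δ_lcast W q⁻¹ (one_mul q).symm ee x] at hF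
  have claim : ∀ t : H q ⊗[k] H q⁻¹,
      TensorProduct.lid k (H q) (TensorProduct.map W.ε.toLinearMap LinearMap.id
        (TensorProduct.map LinearMap.id (LinearMap.mul' k (H q))
          (TensorProduct.map LinearMap.id
            (TensorProduct.map LinearMap.id ((lcast k (inv_inv q)).comp (W.S q⁻¹)))
            ((TensorProduct.assoc k (H (1:G)) (H q) (H q⁻¹))
              (TensorProduct.map (W.Δ 1 q).toLinearMap LinearMap.id
                (TensorProduct.map (lcast k (one_mul q).symm) LinearMap.id t))))))
      = LinearMap.mul' k (H q)
          (TensorProduct.map LinearMap.id ((lcast k (inv_inv q)).comp (W.S q⁻¹)) t) := by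
    intro t
    induction t using TensorProduct.induction_on with
    | zero => simp
    | tmul u v =>
        simp only [TensorProduct.map_tmul, LinearMap.id_coe, id_eq]
        rw [aux_inner]
        simp only [AlgHom.toLinearMap_apply]
        rw [W.counit_left q (lcast k (one_mul q).symm u), lcast_lcast_s13, lcast_refl]
        simp [LinearMap.mul'_apply]
    | add a b ha hb => simp only [map_add, ha, hb]
  rw [claim (W.Δ q q⁻¹ x)] at hF
  rw [hF]
  simp only [TensorProduct.map_tmul, TensorProduct.lid_tmul, LinearMap.id_coe, id_eq,
    lcast_lcast_s13]
  rfl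

end Aux


/-- relation (3.22): If `Δ(δ_{pq}(h)) = δ_p(h_(1,p)) ⊗ h_(2,q)
 + r_p h_(1,p) ⊗ δ_q(h_(2,q))` and `ε ∘ δ_1 = 0`, then for `h ∈ H_1`:
`δ_p(h_(1,p))S_{p⁻¹}(h_(2,p⁻¹)) + r_p h_(1,p) S_{p⁻¹}(δ_{p⁻¹}(h_(2,p⁻¹))) = 0`,
equivalently `h_(1,p)S_{p⁻¹}(δ_{p⁻¹}(h_(2,p⁻¹))) = −r_p⁻¹ δ_p(h_(1,p))S_{p⁻¹}(h_(2,p⁻¹))`. -/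
theorem statement13 (k : Type*) [Field k] {G : Type*} [Group G]
    (H : G → Type*) [∀ p, Ring (H p)] [∀ p, Algebra k (H p)]
    (W : GCHCQG k H)
    (r : ∀ p : G, (H p)ˣ)
    (δ : ∀ p : G, H p →ₗ[k] H p)
    (hD3 : ∀ (p q : G) (h : H (p * q)),
      W.Δ p q (δ (p * q) h)
        = TensorProduct.map (δ p) LinearMap.id (W.Δ p q h)
          + TensorProduct.map (LinearMap.mulLeft k ((r p : H p))) (δ q) (W.Δ p q h))
    (hεδ : ∀ h : H (1 : G), W.ε (δ 1 h) = 0) :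
    ∀ (p : G) (h : H (1 : G)),
      (LinearMap.mul' k (H p)
          (TensorProduct.map (δ p) ((lcast k (inv_inv p)).comp (W.S p⁻¹))
            (W.Δ p p⁻¹ (lcast k (mul_inv_cancel p).symm h)))
        + (r p : H p) *
          LinearMap.mul' k (H p)
            (TensorProduct.map LinearMap.id
              (((lcast k (inv_inv p)).comp (W.S p⁻¹)).comp (δ p⁻¹))
              (W.Δ p p⁻¹ (lcast k (mul_inv_cancel p).symm h)))
        = 0) ∧
      (LinearMap.mul' k (H p)
          (TensorProduct.map LinearMap.id
            (((lcast k (inv_inv p)).comp (W.S p⁻¹)).comp (δ p⁻¹))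
            (W.Δ p p⁻¹ (lcast k (mul_inv_cancel p).symm h)))
        = - ((((r p)⁻¹ : (H p)ˣ) : H p) *
            LinearMap.mul' k (H p)
              (TensorProduct.map (δ p) ((lcast k (inv_inv p)).comp (W.S p⁻¹))
                (W.Δ p p⁻¹ (lcast k (mul_inv_cancel p).symm h))))) := by
  intro p h
  have hkey := key_antipode W p (δ (p * p⁻¹) (lcast k (mul_inv_cancel p).symm h))
  rw [hD3 p p⁻¹ (lcast k (mul_inv_cancel p).symm h)] at hkey
  rw [map_add, map_add] at hkey
  simp only [tmap_tmap, LinearMap.comp_id, LinearMap.id_comp] at hkey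
  rw [mul'_map_mulLeft] at hkey
  rw [delta_lcast δ, lcast_lcast_s13, lcast_refl, hεδ, zero_smul] at hkey
  refine ⟨hkey, ?_⟩
  have h2 : (r p : H p) *
      LinearMap.mul' k (H p)
        (TensorProduct.map LinearMap.id
          (((lcast k (inv_inv p)).comp (W.S p⁻¹)).comp (δ p⁻¹))
          (W.Δ p p⁻¹ (lcast k (mul_inv_cancel p).symm h)))
      = - LinearMap.mul' k (H p)
          (TensorProduct.map (δ p) ((lcast k (inv_inv p)).comp (W.S p⁻¹))
            (W.Δ p p⁻¹ (lcast k (mul_inv_cancel p).symm h))) := by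
    rw [eq_neg_iff_add_eq_zero, add_comm]
    exact hkey
  calc LinearMap.mul' k (H p)
        (TensorProduct.map LinearMap.id
          (((lcast k (inv_inv p)).comp (W.S p⁻¹)).comp (δ p⁻¹))
          (W.Δ p p⁻¹ (lcast k (mul_inv_cancel p).symm h)))
      = (((r p)⁻¹ : (H p)ˣ) : H p) * ((r p : H p) *
          LinearMap.mul' k (H p)
            (TensorProduct.map LinearMap.id
              (((lcast k (inv_inv p)).comp (W.S p⁻¹)).comp (δ p⁻¹))
              (W.Δ p p⁻¹ (lcast k (mul_inv_cancel p).symm h)))) :=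
        (Units.inv_mul_cancel_left _ _).symm
    _ = _ := by rw [h2, mul_neg]
end
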